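/- arXiv:1307.5765 — 4 statements merged into one kernel-verified Lean document; each statement's English description precedes it below -/
import Mathlib

section
/- An automorphism σ of an irreducible reduced finite root system R preserves some base of R if and only if no root of R vanishes on the fixed-point sublattice X̌^σ of the coweight lattice X̌ = Hom(ZR, Z); equivalently, σ is based iff there exists a vector v̌ fixed by σ with ⟨α, v̌⟩ ≠ 0 for all α ∈ R. -/
open scoped InnerProductSpace
open Module

variable {V : Type*} [NormedAddCommGroup V] [InnerProductSpace ℝ V] [FiniteDimensional ℝ V]

/-- The Cartan pairing `⟨β, α̌⟩ = 2⟪α, β⟫/⟪α, α⟫`. -/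
noncomputable def cpair (α β : V) : ℝ := 2 * ⟪α, β⟫_ℝ / ⟪α, α⟫_ℝ

/-- Axioms for a (crystallographic) finite root system `R` spanning `V`. -/
structure IsRootSystem (R : Finset V) : Prop where
  nonzero : ∀ α ∈ R, α ≠ 0
  span : Submodule.span ℝ (R : Set V) = ⊤
  reflMem : ∀ α ∈ R, ∀ β ∈ R, β - cpair α β • α ∈ R
  pairInt : ∀ α ∈ R, ∀ β ∈ R, ∃ n : ℤ, (n : ℝ) = cpair α β

/-- `R` is reduced: the only multiples of a root which are roots are `±` itself. -/
def IsReducedRS (R : Finset V) : Prop := ∀ α ∈ R, ∀ t : ℝ, t • α ∈ R → t = 1 ∨ t = -1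

/-- `R` is irreducible: it admits no nontrivial orthogonal decomposition. -/
def IsIrreducibleRS (R : Finset V) : Prop :=
  (R : Set V).Nonempty ∧
    ∀ S : Finset V, S ⊆ R → (∀ α ∈ S, ∀ β ∈ R, β ∉ S → ⟪α, β⟫_ℝ = 0) → S = ∅ ∨ S = R

/-- `Δ` is a base (set of simple roots) of the root system `R`. -/
structure IsBaseRS (R Δ : Finset V) : Prop where
  subset : Δ ⊆ R
  indep : LinearIndependent ℝ (fun β : (Δ : Set V) => (β : V))
  span : Submodule.span ℝ (Δ : Set V) = ⊤
  decomp : ∀ α ∈ R,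
      (∃ c : V → ℤ, α = ∑ β ∈ Δ, (c β : ℝ) • β ∧ ∀ β ∈ Δ, 0 ≤ c β) ∨
      (∃ c : V → ℤ, α = ∑ β ∈ Δ, (c β : ℝ) • β ∧ ∀ β ∈ Δ, c β ≤ 0)

/-- The Weyl group of `R`: the subgroup of `GL(V)` generated by the root reflections. -/
def weylGroup (R : Finset V) : Subgroup (V ≃ₗ[ℝ] V) :=
  Subgroup.closure {g | ∃ α ∈ R, ∀ v, g v = v - cpair α v • α}

/-- The coroot-type functional `v ↦ 2⟪α, v⟫/⟪α, α⟫` as a linear functional. -/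
noncomputable def coformL (α : V) : Module.Dual ℝ V where
  toFun v := 2 * ⟪α, v⟫_ℝ / ⟪α, α⟫_ℝ
  map_add' x y := by simp only [inner_add_right]; ring
  map_smul' t x := by
    simp only [real_inner_smul_right, smul_eq_mul, RingHom.id_apply]
    ring

/-- The reflection in the root `α` (the identity as junk value if `α` is degenerate). -/
noncomputable def rootRefl (α : V) : V ≃ₗ[ℝ] V :=
  if h : coformL α α = 2 then Module.reflection h else LinearEquiv.refl ℝ V

/-- The action of `GL(V)` on the dual space: `(g • f) = f ∘ g⁻¹`. -/
def dAct (g : V ≃ₗ[ℝ] V) (f : Module.Dual ℝ V) : Module.Dual ℝ V :=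
  f ∘ₗ (g.symm : V →ₗ[ℝ] V)

/-- The coweight lattice `X̌ = Hom(ℤR, ℤ)`, realised as the integer-valued
linear functionals inside `V* = ℝ ⊗ X̌`. -/
def coweightLat (R : Finset V) : Set (Module.Dual ℝ V) :=
  {f | ∀ α ∈ R, ∃ n : ℤ, f α = (n : ℝ)}

/-!
A `σ`-stable base `Δ` gives the height functional `ρ̌` (value `1` on each simple root): it is
integral, `σ`-fixed because `σ` permutes `Δ`, and nonzero on every root because a root is a
nonnegative or nonpositive combination of `Δ`. Conversely, a `σ`-fixed functional `f` vanishing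
on no root cuts out the positive system `{α | 0 < f α}`, whose indecomposable elements form a
base (Serre, *Complex semisimple Lie algebras*, Ch. V §9); as `σ` preserves both `R` and `f`, it
permutes this base.
-/

open IsAddIndecomposable

lemma exists_nonneg_coeffs_of_mem_closure {M : Type*} [AddCommGroup M] [Module ℝ M]
    {Δ : Finset M} {x : M} (hx : x ∈ AddSubmonoid.closure (Δ : Set M)) :
    ∃ c : M → ℤ, x = ∑ β ∈ Δ, (c β : ℝ) • β ∧ ∀ β ∈ Δ, 0 ≤ c β := by
  classical
  induction hx using AddSubmonoid.closure_induction with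
  | mem β hβ =>
    refine ⟨fun γ => if γ = β then 1 else 0, ?_, fun γ _ => by positivity⟩
    simp [ite_smul, Finset.mem_coe.mp hβ]
  | zero => exact ⟨0, by simp, fun _ _ => le_rfl⟩
  | add x y _ _ hx hy =>
    obtain ⟨c, rfl, hc⟩ := hx
    obtain ⟨d, rfl, hd⟩ := hy
    refine ⟨c + d, ?_, fun β hβ => add_nonneg (hc β hβ) (hd β hβ)⟩
    simp [add_smul, Finset.sum_add_distrib]

lemma sum_smul_eq_zero_of_sum_eq_zero {M : Type*} [AddCommGroup M] [Module ℝ M] {Δ : Finset M}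
    {c : M → ℤ} (hc : (∀ β ∈ Δ, 0 ≤ c β) ∨ (∀ β ∈ Δ, c β ≤ 0)) (h0 : ∑ β ∈ Δ, c β = 0) :
    ∑ β ∈ Δ, (c β : ℝ) • β = 0 := by
  have hc0 : ∀ β ∈ Δ, c β = 0 :=
    hc.elim (fun h => (Finset.sum_eq_zero_iff_of_nonneg h).mp h0)
      (fun h => (Finset.sum_eq_zero_iff_of_nonpos h).mp h0)
  exact Finset.sum_eq_zero fun β hβ => by simp [hc0 β hβ]

section

variable {E : Type*} [NormedAddCommGroup E] [InnerProductSpace ℝ E]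

lemma cpair_self {α : E} (hα : α ≠ 0) : cpair α α = 2 := by
  have : ⟪α, α⟫_ℝ ≠ 0 := inner_self_ne_zero.mpr hα
  rw [cpair]; field_simp

lemma cpair_pos_of_inner_pos {α β : E} (h : 0 < ⟪α, β⟫_ℝ) : 0 < cpair α β := by
  have hα : α ≠ 0 := by rintro rfl; simp at h
  exact div_pos (by positivity) (real_inner_self_pos.mpr hα)

lemma cpair_mul_cpair_le_four (α β : E) : cpair α β * cpair β α ≤ 4 := by
  rw [cpair, cpair, real_inner_comm α β, div_mul_div_comm]
  refine div_le_of_le_mul₀ (mul_nonneg real_inner_self_nonneg real_inner_self_nonneg)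
    (by norm_num) ?_
  nlinarith [real_inner_mul_inner_self_le α β]

lemma eq_of_cpair_eq_two {α β : E} (hαβ : cpair α β = 2) (hβα : cpair β α = 2) : α = β := by
  have inner_eq_self : ∀ {α β : E}, cpair α β = 2 → ⟪α, β⟫_ℝ = ⟪α, α⟫_ℝ := by
    intro α β h
    have : ⟪α, α⟫_ℝ ≠ 0 := by intro h0; rw [cpair, h0, div_zero] at h; norm_num at h
    rw [cpair, div_eq_iff this] at h
    linarith
  have h1 := inner_eq_self hαβ
  have h2 := inner_eq_self hβα
  rw [real_inner_comm] at h2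
  rw [← sub_eq_zero, ← inner_self_eq_zero (𝕜 := ℝ), inner_sub_left, inner_sub_right,
    inner_sub_right, real_inner_comm α β]
  linarith

namespace IsRootSystem

variable {R : Finset E}

lemma neg_mem (hR : IsRootSystem R) {α : E} (hα : α ∈ R) : -α ∈ R := by
  simpa [cpair_self (hR.nonzero α hα), two_smul] using hR.reflMem α hα α hα

lemma sub_mem_of_inner_pos (hR : IsRootSystem R) {α β : E} (hα : α ∈ R) (hβ : β ∈ R)
    (hne : α ≠ β) (hpos : 0 < ⟪α, β⟫_ℝ) : α - β ∈ R := by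
  obtain ⟨n, hn⟩ := hR.pairInt α hα β hβ
  obtain ⟨m, hm⟩ := hR.pairInt β hβ α hα
  have hn0 : 0 < n := by exact_mod_cast hn ▸ cpair_pos_of_inner_pos hpos
  have hm0 : 0 < m := by
    exact_mod_cast hm ▸ cpair_pos_of_inner_pos (real_inner_comm α β ▸ hpos)
  have hnm : n * m ≤ 4 := by exact_mod_cast hn ▸ hm ▸ cpair_mul_cpair_le_four α β
  have hcases : m = 1 ∨ n = 1 ∨ (n = 2 ∧ m = 2) := by
    have : n ≤ 4 := by nlinarith
    have : m ≤ 4 := by nlinarith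
    interval_cases n <;> interval_cases m <;> simp_all
  rcases hcases with rfl | rfl | ⟨rfl, rfl⟩
  · simpa [← hm] using hR.reflMem β hβ α hα
  · have := hR.neg_mem (by simpa [← hn] using hR.reflMem α hα β hβ)
    rwa [neg_sub] at this
  · exact absurd (eq_of_cpair_eq_two (by simp [← hn]) (by simp [← hm])) hne

end IsRootSystem

namespace IsBaseRS

variable {R Δ : Finset E}

noncomputable def basis (h : IsBaseRS R Δ) : Basis (Δ : Set E) ℝ E :=
  Basis.mk h.indep (by rw [Subtype.range_coe, h.span])

lemma basis_apply (h : IsBaseRS R Δ) (i : (Δ : Set E)) : h.basis i = i :=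
  Basis.mk_apply _ _ _

/-- The height functional `ρ̌`, the sum of the fundamental coweights of `Δ`. -/
noncomputable def height (h : IsBaseRS R Δ) : Module.Dual ℝ E :=
  h.basis.sumCoords

lemma height_of_mem (h : IsBaseRS R Δ) {β : E} (hβ : β ∈ Δ) : h.height β = 1 := by
  have := h.basis.sumCoords_self_apply (i := ⟨β, hβ⟩)
  rwa [h.basis_apply] at this

lemma height_sum (h : IsBaseRS R Δ) (c : E → ℤ) :
    h.height (∑ β ∈ Δ, (c β : ℝ) • β) = ∑ β ∈ Δ, c β := by
  push_cast
  simp only [map_sum, map_smul, smul_eq_mul]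
  exact Finset.sum_congr rfl fun β hβ => by rw [h.height_of_mem hβ, mul_one]

lemma height_mem_coweightLat (h : IsBaseRS R Δ) : h.height ∈ coweightLat R := by
  intro α hα
  rcases h.decomp α hα with ⟨c, rfl, -⟩ | ⟨c, rfl, -⟩ <;> exact ⟨_, h.height_sum c⟩

lemma height_ne_zero (h : IsBaseRS R Δ) {α : E} (hα : α ∈ R) (hα0 : α ≠ 0) :
    h.height α ≠ 0 := by
  obtain ⟨c, rfl, hc⟩ : ∃ c : E → ℤ, α = ∑ β ∈ Δ, (c β : ℝ) • β ∧
      ((∀ β ∈ Δ, 0 ≤ c β) ∨ (∀ β ∈ Δ, c β ≤ 0)) := by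
    rcases h.decomp α hα with ⟨c, e, hc⟩ | ⟨c, e, hc⟩
    exacts [⟨c, e, .inl hc⟩, ⟨c, e, .inr hc⟩]
  rw [h.height_sum]
  exact fun h0 => hα0 (sum_smul_eq_zero_of_sum_eq_zero hc (by exact_mod_cast h0))

lemma dAct_height (h : IsBaseRS R Δ) {σ : E ≃ₗ[ℝ] E} (hσ : (σ : E → E) '' Δ = Δ) :
    dAct σ h.height = h.height := by
  refine h.basis.ext fun β => ?_
  have hβ : σ.symm β ∈ Δ := by
    have : (β : E) ∈ (σ : E → E) '' Δ := by rw [hσ]; exact β.2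
    rwa [σ.image_eq_preimage_symm] at this
  simp [dAct, h.basis_apply, h.height_of_mem hβ, h.height_of_mem β.2]

end IsBaseRS

section SimpleRoots

variable {R : Finset E} {f : Module.Dual ℝ E}

noncomputable def simpleRoots (R : Finset E) (f : Module.Dual ℝ E) : Finset E :=
  (Set.toFinite (((↑) : R → E) '' baseOf ((↑) : R → E) (f : E →+ ℝ))).toFinset

lemma coe_simpleRoots :
    (simpleRoots R f : Set E) = ((↑) : R → E) '' baseOf ((↑) : R → E) (f : E →+ ℝ) :=
  Set.Finite.coe_toFinset _

lemma mem_simpleRoots {α : E} :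
    α ∈ simpleRoots R f ↔ α ∈ R ∧ 0 < f α ∧
      ∀ β ∈ R, 0 < f β → ∀ γ ∈ R, 0 < f γ → α = β + γ → β = 0 ∨ γ = 0 := by
  rw [← Finset.mem_coe, coe_simpleRoots]
  simp [baseOf, and_left_comm]

lemma simpleRoots_subset : simpleRoots R f ⊆ R := fun _ hα => (mem_simpleRoots.mp hα).1

lemma pos_of_mem_simpleRoots {α : E} (hα : α ∈ simpleRoots R f) : 0 < f α :=
  (mem_simpleRoots.mp hα).2.1

lemma mem_closure_simpleRoots {α : E} (hα : α ∈ R) (hpos : 0 < f α) :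
    α ∈ AddSubmonoid.closure (simpleRoots R f : Set E) := by
  rw [coe_simpleRoots, AddSubmonoid.closure_image_isAddIndecomposable_baseOf]
  exact AddSubmonoid.subset_closure ⟨⟨α, hα⟩, hpos, rfl⟩

lemma sub_notMem_of_mem_simpleRoots (hR : IsRootSystem R) (hf : ∀ α ∈ R, f α ≠ 0) {α β : E}
    (hα : α ∈ simpleRoots R f) (hβ : β ∈ simpleRoots R f) (hne : α ≠ β) : α - β ∉ R := by
  let _ : InvolutiveNeg R :=
    { neg α := ⟨-α, hR.neg_mem α.2⟩, neg_neg α := Subtype.ext (neg_neg _) }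
  rw [← Finset.mem_coe, coe_simpleRoots] at hα hβ
  obtain ⟨i, hi, rfl⟩ := hα
  obtain ⟨j, hj, rfl⟩ := hβ
  have := pairwise_baseOf_sub_notMem ((↑) : R → E) (fun _ => rfl) (f : E →+ ℝ)
    (fun i => hf i i.2) hi hj (by rintro rfl; exact hne rfl)
  exact fun h => this ⟨⟨_, h⟩, rfl⟩

lemma inner_nonpos_of_mem_simpleRoots (hR : IsRootSystem R) (hf : ∀ α ∈ R, f α ≠ 0)
    {α β : E} (hα : α ∈ simpleRoots R f) (hβ : β ∈ simpleRoots R f) (hne : α ≠ β) :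
    ⟪α, β⟫_ℝ ≤ 0 :=
  not_lt.mp fun hpos => sub_notMem_of_mem_simpleRoots hR hf hα hβ hne <|
    hR.sub_mem_of_inner_pos (simpleRoots_subset hα) (simpleRoots_subset hβ) hne hpos

lemma linearIndependent_simpleRoots (hR : IsRootSystem R) (hf : ∀ α ∈ R, f α ≠ 0) :
    LinearIndependent ℝ (fun β : (simpleRoots R f : Set E) => (β : E)) :=
  LinearMap.BilinForm.linearIndependent_of_pairwise_le_zero (innerₗ E)
    (fun _ hx => real_inner_self_pos.mpr hx) f _
    (fun β => pos_of_mem_simpleRoots β.2)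
    (fun β γ hne => inner_nonpos_of_mem_simpleRoots hR hf β.2 γ.2 (Subtype.coe_ne_coe.mpr hne))

lemma mem_closure_simpleRoots_or_neg (hR : IsRootSystem R) (hf : ∀ α ∈ R, f α ≠ 0) {α : E}
    (hα : α ∈ R) :
    α ∈ AddSubmonoid.closure (simpleRoots R f : Set E) ∨
      -α ∈ AddSubmonoid.closure (simpleRoots R f : Set E) := by
  rcases (hf α hα).lt_or_gt with hneg | hpos
  · exact .inr (mem_closure_simpleRoots (hR.neg_mem hα) (by simpa using hneg))
  · exact .inl (mem_closure_simpleRoots hα hpos)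

lemma span_simpleRoots (hR : IsRootSystem R) (hf : ∀ α ∈ R, f α ≠ 0) :
    Submodule.span ℝ (simpleRoots R f : Set E) = ⊤ := by
  rw [eq_top_iff, ← hR.span, Submodule.span_le]
  intro α hα
  have hcl : AddSubmonoid.closure (simpleRoots R f : Set E) ≤
      (Submodule.span ℝ (simpleRoots R f : Set E)).toAddSubmonoid :=
    AddSubmonoid.closure_le.mpr Submodule.subset_span
  rcases mem_closure_simpleRoots_or_neg hR hf hα with h | h
  · exact hcl h
  · simpa using Submodule.neg_mem _ (hcl h)

theorem isBaseRS_simpleRoots (hR : IsRootSystem R) (hf : ∀ α ∈ R, f α ≠ 0) :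
    IsBaseRS R (simpleRoots R f) where
  subset := simpleRoots_subset
  indep := linearIndependent_simpleRoots hR hf
  span := span_simpleRoots hR hf
  decomp α hα := by
    rcases mem_closure_simpleRoots_or_neg hR hf hα with h | h
    · exact .inl (exists_nonneg_coeffs_of_mem_closure h)
    · obtain ⟨c, hc, hc0⟩ := exists_nonneg_coeffs_of_mem_closure h
      refine .inr ⟨-c, ?_, fun β hβ => neg_nonpos.mpr (hc0 β hβ)⟩
      simp [← hc]

lemma apply_mem_simpleRoots_iff {σ : E ≃ₗ[ℝ] E} (hσR : ∀ α, σ α ∈ R ↔ α ∈ R)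
    (hfσ : ∀ α, f (σ α) = f α) {α : E} : σ α ∈ simpleRoots R f ↔ α ∈ simpleRoots R f := by
  simp only [mem_simpleRoots, hσR, hfσ]
  refine and_congr_right fun _ => and_congr_right fun _ =>
    ⟨fun h β hβ hβ0 γ hγ hγ0 e => ?_, fun h β hβ hβ0 γ hγ hγ0 e => ?_⟩
  · simpa using h (σ β) ((hσR β).mpr hβ) (by rwa [hfσ]) (σ γ) ((hσR γ).mpr hγ) (by rwa [hfσ])
      (by rw [e, map_add])
  · have := h (σ.symm β) ((hσR _).mp (by rwa [σ.apply_symm_apply]))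
      (by rwa [← hfσ, σ.apply_symm_apply]) (σ.symm γ) ((hσR _).mp (by rwa [σ.apply_symm_apply]))
      (by rwa [← hfσ, σ.apply_symm_apply]) (by rw [← map_add, ← e, σ.symm_apply_apply])
    simpa using this

lemma image_simpleRoots {σ : E ≃ₗ[ℝ] E} (hσ : (σ : E → E) '' R = R) (hfσ : dAct σ f = f) :
    (σ : E → E) '' simpleRoots R f = simpleRoots R f := by
  have hσR : ∀ α, σ α ∈ R ↔ α ∈ R := fun α => by
    have := σ.injective.mem_set_image (s := (R : Set E)) (a := α)
    rwa [hσ] at this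
  have hfσ' : ∀ α, f (σ α) = f α := fun α => by
    simpa [dAct] using (LinearMap.congr_fun hfσ (σ α)).symm
  ext α
  rw [σ.image_eq_preimage_symm, Set.mem_preimage, Finset.mem_coe, Finset.mem_coe,
    ← apply_mem_simpleRoots_iff hσR hfσ', σ.apply_symm_apply]

end SimpleRoots

end

theorem based_iff_no_root_vanishes_on_fixed_lattice_general
    {V : Type*} [NormedAddCommGroup V] [InnerProductSpace ℝ V]
    (R : Finset V) (hRS : IsRootSystem R)
    (σ : V ≃ₗ[ℝ] V) (hσ : (σ : V → V) '' R = R) :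
    (∃ Δ : Finset V, IsBaseRS R Δ ∧ (σ : V → V) '' Δ = Δ) ↔
      (∃ f : Module.Dual ℝ V, f ∈ coweightLat R ∧ dAct σ f = f ∧ ∀ α ∈ R, f α ≠ 0) := by
  constructor
  · rintro ⟨Δ, hΔ, hσΔ⟩
    exact ⟨hΔ.height, hΔ.height_mem_coweightLat, hΔ.dAct_height hσΔ,
      fun α hα => hΔ.height_ne_zero hα (hRS.nonzero α hα)⟩
  · rintro ⟨f, -, hfσ, hf⟩
    exact ⟨simpleRoots R f, isBaseRS_simpleRoots hRS hf, image_simpleRoots hσ hfσ⟩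

/-- An automorphism `σ` of an irreducible reduced finite root
system `R` preserves some base of `R` if and only if there is a `σ`-fixed vector
`v̌` in the coweight lattice `X̌ = Hom(ℤR, ℤ)` with `⟨α, v̌⟩ ≠ 0` for all roots
`α` (equivalently, no root vanishes on the fixed-point sublattice `X̌^σ`). -/
theorem based_iff_no_root_vanishes_on_fixed_lattice
    {V : Type*} [NormedAddCommGroup V] [InnerProductSpace ℝ V] [FiniteDimensional ℝ V]
    (R : Finset V) (hRS : IsRootSystem R) (hred : IsReducedRS R)
    (hirr : IsIrreducibleRS R)
    (σ : V ≃ₗ[ℝ] V) (hσ : (σ : V → V) '' R = R) :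
    (∃ Δ : Finset V, IsBaseRS R Δ ∧ (σ : V → V) '' Δ = Δ) ↔
      (∃ f : Module.Dual ℝ V, f ∈ coweightLat R ∧ dAct σ f = f ∧ ∀ α ∈ R, f α ≠ 0) :=
  based_iff_no_root_vanishes_on_fixed_lattice_general R hRS σ hσ
end

section
/- Let σ ∈ Aut(R) and let k be an algebraically closed field in which the order m of σ is nonzero. If σ has a k-regular eigenvector in k ⊗ X̌ whose eigenvalue ζ ∈ k^× has order equal to m, then ⟨σ⟩ acts freely on R (σ is Z-regular). -/
/-- Root system axioms for a finite subset `R` of the lattice `X = ℤR`: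
`R` spans `X`, roots are nonzero, and for every root `α` there is a coroot
`α̌ ∈ Hom(X, ℤ)` with `⟨α, α̌⟩ = 2` whose reflection preserves `R`. -/
structure IsRootSystemZ {X : Type*} [AddCommGroup X] [Module ℤ X] (R : Finset X) : Prop where
  nonzero : ∀ α ∈ R, α ≠ 0
  span : Submodule.span ℤ (R : Set X) = ⊤
  coroot : ∀ α ∈ R, ∃ cα : X →ₗ[ℤ] ℤ, cα α = 2 ∧ ∀ β ∈ R, β - cα β • α ∈ R

/-- Let `σ ∈ Aut(R)` and let `k` be an algebraically closed
field in which the order `m` of `σ` is nonzero.  If `σ` has a `k`-regular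
eigenvector in `k ⊗ X̌` (realised as `Hom_ℤ(X, k)`) whose eigenvalue `ζ ∈ k^×`
has order `m`, then `⟨σ⟩` acts freely on `R`, i.e. `σ` is `ℤ`-regular. -/
theorem kRegular_implies_ZRegular
    {X : Type*} [AddCommGroup X] [Module ℤ X] [Module.Free ℤ X] [Module.Finite ℤ X]
    {k : Type*} [Field k] [IsAlgClosed k]
    (R : Finset X) (hRS : IsRootSystemZ R)
    (σ : X ≃ₗ[ℤ] X) (hσ : ∀ α ∈ R, σ α ∈ R)
    (m : ℕ) (hm : 0 < m) (horder : orderOf σ = m) (hchar : (m : k) ≠ 0)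
    (ζ : k) (hζm : ζ ^ m = 1) (hζord : ∀ d : ℕ, 0 < d → d < m → ζ ^ d ≠ 1)
    (v : X →ₗ[ℤ] k)
    (heig : ∀ x : X, v (σ.symm x) = ζ * v x)
    (hreg : ∀ α ∈ R, v α ≠ 0) :
    ∀ β ∈ R, ∀ d : ℕ, 0 < d → d < m → (σ ^ d) β ≠ β := by
  intro β hβ d hd hdm hfix
  have key : ∀ n : ℕ, ∀ x : X, v ((σ.symm ^ n) x) = ζ ^ n * v x := by
    intro n
    induction n with
    | zero => intro x; simp
    | succ n ih =>
      intro x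
      rw [pow_succ, pow_succ]
      calc v ((σ.symm ^ n * σ.symm) x) = v ((σ.symm ^ n) (σ.symm x)) := rfl
        _ = ζ ^ n * v (σ.symm x) := ih _
        _ = ζ ^ n * (ζ * v x) := by rw [heig]
        _ = ζ ^ n * ζ * v x := by ring
  have hsymm : (σ.symm ^ d) β = β := by
    have h1 : σ.symm = σ⁻¹ := rfl
    rw [h1, inv_pow]
    show (σ ^ d).symm β = β
    exact (σ ^ d).symm_apply_eq.mpr hfix.symm
  have := key d β
  rw [hsymm] at this
  have hv : v β ≠ 0 := hreg β hβ
  have hζd : ζ ^ d = 1 := by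
    have h1 : ζ ^ d * v β = 1 * v β := by rw [one_mul]; exact this.symm
    exact mul_right_cancel₀ hv h1
  exact hζord d hd hdm hζd
end

section
/- For the principal point x_m = x_0 + (1/m)ρ̌ in the twisted affine apartment of (R, ϑ), the Kac coordinates are s_i = 1 for all i = 1, …, ℓ_ϑ and s_0 = 1 + (m − h_ϑ)/e, where h_ϑ = e·(b_0 + b_1 + ⋯ + b_{ℓ_ϑ}) is the twisted Coxeter number and e is the order of ϑ. In particular s_0 = 1 when m = h_ϑ. -/
/-! The coordinates `s_i = m·ψ_i(x_m)` satisfy `Σ b_i s_i = m/e`; for `i ≥ 1` linearity gives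
`s_i = ψ_i(ρ̌) = 1`, and since `b_0 = 1` the relation then determines `s_0`. -/

open Finset

theorem IsLinearMap.mul_map_inv_smul {K V : Type*} [Field K] [AddCommGroup V] [Module K V]
    {f : V → K} (hf : IsLinearMap K f) {c : K} (hc : c ≠ 0) (v : V) :
    c * f (c⁻¹ • v) = f v := by
  rw [hf.map_smul, smul_eq_mul, mul_inv_cancel_left₀ hc]

theorem Fin.head_eq_of_sum_mul_eq_of_tail_eq_one {R : Type*} [CommRing R] {n : ℕ}
    {b s : Fin (n + 1) → R} {c : R} (hb0 : b 0 = 1) (hs : ∀ i, i ≠ 0 → s i = 1)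
    (hsum : ∑ i, b i * s i = c) :
    s 0 = c + 1 - ∑ i, b i := by
  have htail : ∀ i : Fin n, b i.succ * s i.succ = b i.succ := fun i => by
    rw [hs i.succ i.succ_ne_zero, mul_one]
  rw [Fin.sum_univ_succ, hb0, one_mul, Finset.sum_congr rfl fun i _ => htail i] at hsum
  rw [Fin.sum_univ_succ, hb0]
  linear_combination hsum

theorem principal_point_kac_coordinates_general
    {V : Type*} [AddCommGroup V] [Module ℝ V]
    (ℓ : ℕ) (b : Fin (ℓ + 1) → ℕ) (ψ : Fin (ℓ + 1) → V → ℝ)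
    (ρ : V) (e m : ℕ) (he : 0 < e) (hm : 0 < m)
    (hb0 : b 0 = 1)
    (hlin : ∀ i : Fin (ℓ + 1), i ≠ 0 → IsLinearMap ℝ (ψ i))
    (hval : ∀ i : Fin (ℓ + 1), i ≠ 0 → ψ i ρ = 1)
    (hrel : ∀ v : V, ∑ i, (b i : ℝ) * ψ i v = 1 / e) :
    (∀ i : Fin (ℓ + 1), i ≠ 0 → (m : ℝ) * ψ i ((m : ℝ)⁻¹ • ρ) = 1) ∧
    (m : ℝ) * ψ 0 ((m : ℝ)⁻¹ • ρ) =
      1 + ((m : ℝ) - (e : ℝ) * ∑ i, (b i : ℝ)) / e ∧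
    (m = e * ∑ i, b i → (m : ℝ) * ψ 0 ((m : ℝ)⁻¹ • ρ) = 1) := by
  have hmR : (m : ℝ) ≠ 0 := Nat.cast_ne_zero.mpr hm.ne'
  have heR : (e : ℝ) ≠ 0 := Nat.cast_ne_zero.mpr he.ne'
  set s : Fin (ℓ + 1) → ℝ := fun i => (m : ℝ) * ψ i ((m : ℝ)⁻¹ • ρ)
  have hs_tail : ∀ i, i ≠ 0 → s i = 1 := fun i hi =>
    ((hlin i hi).mul_map_inv_smul hmR ρ).trans (hval i hi)
  have hs_sum : ∑ i, (b i : ℝ) * s i = m / e := by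
    simp only [s, mul_left_comm _ (m : ℝ), ← mul_sum, hrel, mul_one_div]
  have hs_head := Fin.head_eq_of_sum_mul_eq_of_tail_eq_one (by simp [hb0]) hs_tail hs_sum
  have hs0 : s 0 = 1 + ((m : ℝ) - e * ∑ i, (b i : ℝ)) / e := by
    rw [hs_head]
    field_simp
    ring
  refine ⟨hs_tail, hs0, fun hme => ?_⟩
  change s 0 = 1
  rw [hs0, hme]
  push_cast
  simp

/-- For the principal point `x_m = x_0 + (1/m)ρ̌` in the
twisted affine apartment of `(R, ϑ)` (realised with basepoint `x_0 = 0`, so the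
simple affine roots `ψ_i`, `i ≥ 1`, are linear with `ψ_i(ρ̌) = 1` and
`Σ b_i ψ_i = 1/e`), the Kac coordinates `s_i = m·ψ_i(x_m)` are `s_i = 1` for
`i = 1, …, ℓ_ϑ` and `s_0 = 1 + (m − h_ϑ)/e`, where
`h_ϑ = e·(b_0 + ⋯ + b_{ℓ_ϑ})` is the twisted Coxeter number.  In particular
`s_0 = 1` when `m = h_ϑ`. -/
theorem principal_point_kac_coordinates
    {V : Type*} [AddCommGroup V] [Module ℝ V]
    (ℓ : ℕ) (b : Fin (ℓ + 1) → ℕ) (ψ : Fin (ℓ + 1) → V → ℝ)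
    (ρ : V) (e m : ℕ) (he : 0 < e) (hm : 0 < m) (hem : e ∣ m)
    (hb0 : b 0 = 1)
    (hlin : ∀ i : Fin (ℓ + 1), i ≠ 0 → IsLinearMap ℝ (ψ i))
    (hval : ∀ i : Fin (ℓ + 1), i ≠ 0 → ψ i ρ = 1)
    (hrel : ∀ v : V, ∑ i, (b i : ℝ) * ψ i v = 1 / e) :
    (∀ i : Fin (ℓ + 1), i ≠ 0 → (m : ℝ) * ψ i ((m : ℝ)⁻¹ • ρ) = 1) ∧
    (m : ℝ) * ψ 0 ((m : ℝ)⁻¹ • ρ) =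
      1 + ((m : ℝ) - (e : ℝ) * ∑ i, (b i : ℝ)) / e ∧
    (m = e * ∑ i, b i → (m : ℝ) * ψ 0 ((m : ℝ)⁻¹ • ρ) = 1) :=
  principal_point_kac_coordinates_general ℓ b ψ ρ e m he hm hb0 hlin hval hrel
end

section
/- Let w ∈ W_Π be an element of order two in the stabilizer of the extended (affine) simple root set Π of a root system R of adjoint type, and let ω̌_j be the unique minuscule coweight with w·ω̌_j = −ω̌_j. Write w = r_1 r_2 ⋯ r_m as a product of reflections in mutually orthogonal roots γ_1,…,γ_m, with signs chosen so that ⟨γ_i, ω̌_j⟩ = 1 for all i. Then γ̌_1 + γ̌_2 + ⋯ + γ̌_m = 2ω̌_j. -/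
open scoped InnerProductSpace
open Module

variable {V : Type*} [NormedAddCommGroup V] [InnerProductSpace ℝ V] [FiniteDimensional ℝ V]

/-!
The vector `v = 2ω̌ - (γ̌₁ + ⋯ + γ̌_m)` pairs to `2 - 2 = 0` with every `γ_i`, because the `γ_i` are
mutually orthogonal and `⟨γ_i, ω̌⟩ = 1`. Hence every reflection `r_i` fixes `v`, and so does
`w = r₁ ⋯ r_m`. On the other hand `w` negates `ω̌` and every `γ_i`, hence negates `v`. So `v = 0`.
-/

section

variable {E : Type*} [NormedAddCommGroup E] [InnerProductSpace ℝ E]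

theorem rootRefl_apply_of_inner_eq_zero {α v : E} (h : ⟪α, v⟫_ℝ = 0) : rootRefl α v = v := by
  unfold rootRefl
  split_ifs with hα
  · have hv : coformL α v = 0 := by
      change 2 * ⟪α, v⟫_ℝ / ⟪α, α⟫_ℝ = 0
      rw [h, mul_zero, zero_div]
    rw [Module.reflection_apply, hv, zero_smul, sub_zero]
  · rfl

theorem inner_sum_smul_of_pairwise_inner_eq_zero {ι : Type*} [Fintype ι] {γ : ι → E}
    (hγ : ∀ i j, i ≠ j → ⟪γ i, γ j⟫_ℝ = 0) (c : ι → ℝ) (j : ι) :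
    ⟪γ j, ∑ i, c i • γ i⟫_ℝ = c j * ⟪γ j, γ j⟫_ℝ := by
  rw [inner_sum, Finset.sum_eq_single j]
  · exact real_inner_smul_right _ _ _
  · intro i _ hij
    rw [real_inner_smul_right, hγ j i (Ne.symm hij), mul_zero]
  · exact fun hj => absurd (Finset.mem_univ j) hj

end

theorem LinearEquiv.list_prod_apply_eq_self {R M : Type*} [Semiring R] [AddCommMonoid M]
    [Module R M] {l : List (M ≃ₗ[R] M)} {v : M} (h : ∀ g ∈ l, g v = v) : l.prod v = v :=
  MulAction.mem_stabilizer_iff.mp (list_prod_mem (S := MulAction.stabilizer _ v) h)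

theorem sum_coroots_eq_two_minuscule_general
    {V : Type*} [NormedAddCommGroup V] [InnerProductSpace ℝ V]
    (w : V ≃ₗ[ℝ] V)
    (ω : V)
    (hωneg : w ω = -ω)
    (N : ℕ) (γ : Fin N → V)
    (hγorth : ∀ i j, i ≠ j → ⟪γ i, γ j⟫_ℝ = 0)
    (hγneg : ∀ i, w (γ i) = -(γ i))
    (hγω : ∀ i, ⟪γ i, ω⟫_ℝ = 1)
    (hwprod : w = (List.ofFn fun i => rootRefl (γ i)).prod) :
    ∑ i : Fin N, (2 / ⟪γ i, γ i⟫_ℝ) • γ i = (2 : ℝ) • ω := by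
  set c := ∑ i : Fin N, (2 / ⟪γ i, γ i⟫_ℝ) • γ i
  have hγ0 : ∀ i, ⟪γ i, γ i⟫_ℝ ≠ 0 := fun i h => by
    have h1 := hγω i
    rw [inner_self_eq_zero.mp h, inner_zero_left] at h1
    exact zero_ne_one h1
  have hperp : ∀ j, ⟪γ j, (2 : ℝ) • ω - c⟫_ℝ = 0 := fun j => by
    rw [inner_sub_right, real_inner_smul_right, hγω,
      inner_sum_smul_of_pairwise_inner_eq_zero hγorth, div_mul_cancel₀ _ (hγ0 j)]
    norm_num
  have hfix : w ((2 : ℝ) • ω - c) = (2 : ℝ) • ω - c := by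
    rw [hwprod]
    exact LinearEquiv.list_prod_apply_eq_self <| List.forall_mem_ofFn_iff.mpr fun j =>
      rootRefl_apply_of_inner_eq_zero (hperp j)
  have hneg : w ((2 : ℝ) • ω - c) = -((2 : ℝ) • ω - c) := by
    simp only [c, map_sub, map_smul, map_sum, hωneg, hγneg, smul_neg, Finset.sum_neg_distrib]
    abel
  have := IsAddTorsionFree.of_isTorsionFree ℝ V
  exact (sub_eq_zero.mp (self_eq_neg.mp (hfix.symm.trans hneg))).symm

/-- Let `w` be an involution in the stabilizer `W_Π` of the
extended simple-root set `Π = {α₀} ∪ Δ`, and let `ω̌` be the (unique) minuscule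
coweight with `w·ω̌ = −ω̌`.  Write `w = r₁ ⋯ r_N` as a product of reflections
in mutually orthogonal roots `γ₁, …, γ_N`, with signs chosen so that
`⟨γ_i, ω̌⟩ = 1` for all `i`.  Then `γ̌₁ + ⋯ + γ̌_N = 2ω̌`. -/
theorem sum_coroots_eq_two_minuscule
    {V : Type*} [NormedAddCommGroup V] [InnerProductSpace ℝ V] [FiniteDimensional ℝ V]
    (R Δ : Finset V) (hRS : IsRootSystem R) (hred : IsReducedRS R)
    (hirr : IsIrreducibleRS R) (hΔ : IsBaseRS R Δ)
    (α₀ : V) (hα₀ : α₀ ∈ R)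
    (w : V ≃ₗ[ℝ] V) (hwR : (w : V → V) '' R = R)
    (hwPi : (w : V → V) '' (insert α₀ (Δ : Set V)) = insert α₀ (Δ : Set V))
    (hw2 : w * w = 1) (hwne : w ≠ 1)
    (ω : V) (hmin : ∀ α ∈ R, ⟪α, ω⟫_ℝ ∈ ({-1, 0, 1} : Set ℝ))
    (hωneg : w ω = -ω)
    (N : ℕ) (γ : Fin N → V) (hγinj : Function.Injective γ)
    (hγR : ∀ i, γ i ∈ R)
    (hγorth : ∀ i j, i ≠ j → ⟪γ i, γ j⟫_ℝ = 0)
    (hγneg : ∀ i, w (γ i) = -(γ i))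
    (hγω : ∀ i, ⟪γ i, ω⟫_ℝ = 1)
    (hwprod : w = (List.ofFn fun i => rootRefl (γ i)).prod) :
    ∑ i : Fin N, (2 / ⟪γ i, γ i⟫_ℝ) • γ i = (2 : ℝ) • ω :=
  sum_coroots_eq_two_minuscule_general w ω hωneg N γ hγorth hγneg hγω hwprod
end
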